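/- arXiv:1711.10414 — 6 statements merged into one kernel-verified Lean document; each statement's English description precedes it below -/
import Mathlib

section
/- Vapnik–Chervonenkis–Sauer–Shelah: if a range space (X, R) has VC-dimension at most d, then for every finite Y ⊆ X, |{R ∩ Y : R ∈ R}| ≤ ∑_{i=0}^{d} C(|Y|, i), and consequently |{R ∩ Y : R ∈ R}| ≤ (e·|Y|/d)^d whenever |Y| ≥ d ≥ 1. -/
open scoped Classical

noncomputable section

/-- `Y` is shattered by the range family `R`: every subset of `Y` is a trace of some range. -/
def ShattersR {X : Type*} (R : Finset (Finset X)) (Y : Finset X) : Prop :=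
  ∀ Z ⊆ Y, ∃ S ∈ R, S ∩ Y = Z

lemma sum_choose_le_exp_pow (d n : ℕ) (hd : 1 ≤ d) (hdn : d ≤ n) :
    (∑ i ∈ Finset.range (d + 1), (n.choose i : ℝ)) ≤ (Real.exp 1 * n / d) ^ d := by
  have hn0 : 0 < n := by omega
  have hn : 0 < (n : ℝ) := by exact_mod_cast hn0
  have hd' : 0 < (d : ℝ) := by exact_mod_cast hd
  set x : ℝ := (d : ℝ) / n with hx
  have hx0 : 0 < x := by positivity
  have hx1 : x ≤ 1 := by
    rw [hx, div_le_one hn]; exact_mod_cast hdn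
  have key : (∑ i ∈ Finset.range (d + 1), (n.choose i : ℝ)) * x ^ d ≤ Real.exp d := by
    calc (∑ i ∈ Finset.range (d + 1), (n.choose i : ℝ)) * x ^ d
        = ∑ i ∈ Finset.range (d + 1), (n.choose i : ℝ) * x ^ d := by
          rw [Finset.sum_mul]
      _ ≤ ∑ i ∈ Finset.range (d + 1), (n.choose i : ℝ) * x ^ i := by
          apply Finset.sum_le_sum
          intro i hi
          have hile : i ≤ d := by have := Finset.mem_range.1 hi; omega
          exact mul_le_mul_of_nonneg_left
            (pow_le_pow_of_le_one hx0.le hx1 hile) (by positivity)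
      _ ≤ ∑ i ∈ Finset.range (n + 1), (n.choose i : ℝ) * x ^ i := by
          apply Finset.sum_le_sum_of_subset_of_nonneg
          · exact Finset.range_subset_range.2 (by omega)
          · intro i _ _; positivity
      _ = (x + 1) ^ n := by
          rw [add_pow]
          simp [mul_comm, mul_assoc, mul_left_comm]
      _ ≤ Real.exp x ^ n := by
          apply pow_le_pow_left₀ (by positivity)
          exact Real.add_one_le_exp x
      _ = Real.exp (x * n) := by rw [← Real.exp_nat_mul, mul_comm]
      _ = Real.exp d := by
          rw [hx, div_mul_cancel₀]; exact hn.ne'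
  have hxd : 0 < x ^ d := by positivity
  have h2 : (∑ i ∈ Finset.range (d + 1), (n.choose i : ℝ)) ≤ Real.exp d / x ^ d :=
    (le_div_iff₀ hxd).2 key
  refine h2.trans_eq ?_
  rw [hx, div_pow, div_div_eq_mul_div, ← Real.exp_one_pow]
  ring

/-- Vapnik–Chervonenkis–Sauer–Shelah: if the range space has VC-dimension at most `d`,
then for every finite `Y`, `|R|_Y| ≤ ∑_{i=0}^d C(|Y|,i)`, and consequently
`|R|_Y| ≤ (e|Y|/d)^d` whenever `|Y| ≥ d ≥ 1`. -/
theorem sauer_shelah {X : Type*} (R : Finset (Finset X)) (d : ℕ)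
    (hVC : ∀ Y : Finset X, ShattersR R Y → Y.card ≤ d) (Y : Finset X) :
    (R.image (· ∩ Y)).card ≤ ∑ i ∈ Finset.range (d + 1), Y.card.choose i ∧
      (1 ≤ d → d ≤ Y.card →
        ((R.image (· ∩ Y)).card : ℝ) ≤ (Real.exp 1 * Y.card / d) ^ d) := by
  set 𝒜 := R.image (· ∩ Y) with h𝒜
  have h1 : 𝒜.card ≤ ∑ i ∈ Finset.range (d + 1), Y.card.choose i := by
    refine (Finset.card_le_card_shatterer 𝒜).trans ?_
    have hsub : 𝒜.shatterer ⊆ (Finset.range (d+1)).biUnion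
        (fun i => Y.powersetCard i) := by
      intro s hs
      rw [Finset.mem_shatterer] at hs
      obtain ⟨u, hu, hsu⟩ := hs (Finset.Subset.refl s)
      have hsY : s ⊆ Y := by
        obtain ⟨S, _, rfl⟩ := Finset.mem_image.1 hu
        intro a ha
        rw [← hsu] at ha
        exact (Finset.mem_inter.1 (Finset.mem_inter.1 ha).2).2
      have hcard : s.card ≤ d := by
        apply hVC
        intro Z hZ
        obtain ⟨u, hu, hsu⟩ := hs hZ
        obtain ⟨S, hS, rfl⟩ := Finset.mem_image.1 hu
        refine ⟨S, hS, ?_⟩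
        rw [← hsu, Finset.inter_comm s (S ∩ Y), Finset.inter_assoc]
        congr 1
        exact (Finset.inter_eq_right.2 hsY).symm
      exact Finset.mem_biUnion.2 ⟨s.card, Finset.mem_range.2 (by omega),
        Finset.mem_powersetCard.2 ⟨hsY, rfl⟩⟩
    refine (Finset.card_le_card hsub).trans ?_
    refine Finset.card_biUnion_le.trans ?_
    exact Finset.sum_le_sum fun i _ => (Finset.card_powersetCard i Y).le
  refine ⟨h1, fun hd hdn => ?_⟩
  calc (𝒜.card : ℝ) ≤ ∑ i ∈ Finset.range (d + 1), (Y.card.choose i : ℝ) := by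
        exact_mod_cast h1
    _ ≤ (Real.exp 1 * Y.card / d) ^ d := sum_choose_le_exp_pow d Y.card hd hdn

end
end

section
/- (One-inclusion risk bound via out-degree) Suppose the one-inclusion graph of a class F restricted to a sample of n+1 points admits an orientation with maximum out-degree at most d, and the one-inclusion prediction algorithm is defined from this orientation. Then the leave-one-out error LOO = (1/(n+1))·∑_{i=1}^{n+1} 1[f̂_{T^{(i)}}(x_i) ≠ f*(x_i)] satisfies LOO ≤ d/(n+1), and hence for an i.i.d. exchangeable sample, E ρ(f̂, f*) ≤ d/(n+1). -/
open scoped Classical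

noncomputable section

def rho {X : Type*} [Fintype X] (P : X → ℝ) (f g : X → Bool) : ℝ :=
  ∑ x ∈ Finset.univ.filter (fun x => f x ≠ g x), P x

/-- `u` is a vertex of the one-inclusion graph of `F` restricted to the sample `t`. -/
def IsRestriction {X : Type*} {m : ℕ} (F : Finset (X → Bool)) (t : Fin m → X)
    (u : Fin m → Bool) : Prop :=
  ∃ f ∈ F, u = fun i => f (t i)

/-- counting lemma: the number of coordinates whose flip is an out-neighbour of `u`
is at most the out-degree bound. -/
lemma aux_count {m d : ℕ} (u : Fin m → Bool) (Q : (Fin m → Bool) → Prop)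
    (h : Set.ncard {v | Q v} ≤ d) :
    (∑ i : Fin m, if Q (Function.update u i (!(u i))) then (1 : ℝ) else 0) ≤ d := by
  classical
  rw [Finset.sum_boole]
  have hinj : Set.InjOn (fun i => Function.update u i (!(u i)))
      ↑(Finset.univ.filter fun i => Q (Function.update u i (!(u i)))) := by
    intro i _ j _ hij
    by_contra hne
    have h1 := congrFun hij i
    simp [Function.update_apply, hne] at h1
  have hsub : ((fun i => Function.update u i (!(u i))) ''
      ↑(Finset.univ.filter fun i => Q (Function.update u i (!(u i))))) ⊆ {v | Q v} := by
    rintro v ⟨i, hi, rfl⟩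
    exact (Finset.mem_filter.mp hi).2
  have h2 := Set.ncard_le_ncard hsub (Set.toFinite _)
  rw [Set.ncard_image_of_injOn hinj, Set.ncard_coe_finset] at h2
  exact_mod_cast le_trans h2 h

/-- One-inclusion risk bound via out-degree: if, for every sample of `n+1` points, the
one-inclusion graph of `F` restricted to the sample carries an orientation `o` (oriented
edges join restrictions differing in exactly one coordinate, every edge gets exactly one
direction) with out-degree at most `d`, chosen equivariantly w.r.t. permutations of the
sample, then the one-inclusion algorithm (which errs on the hidden coordinate `i` exactly
when the flip of the target restriction at `i` is a vertex and the edge is oriented out of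
the target restriction) has leave-one-out error `LOO ≤ d/(n+1)` on every sample, and its
expected risk satisfies `E ρ(f̂, f*) ≤ d/(n+1)`. -/
theorem one_inclusion_risk_bound {X : Type*} [Fintype X] (P : X → ℝ)
    (hP : ∀ x, 0 ≤ P x) (hP1 : ∑ x, P x = 1)
    (F : Finset (X → Bool)) (fstar : X → Bool) (hf : fstar ∈ F) (d n : ℕ)
    (o : (Fin (n + 1) → X) → (Fin (n + 1) → Bool) → (Fin (n + 1) → Bool) → Prop)
    (hadj : ∀ t u v, o t u v →
      IsRestriction F t u ∧ IsRestriction F t v ∧ ∃ i, v = Function.update u i (!u i))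
    (htot : ∀ t u v, IsRestriction F t u → IsRestriction F t v →
      (∃ i, v = Function.update u i (!u i)) → (o t u v ↔ ¬ o t v u))
    (hdeg : ∀ t u, Set.ncard {v | o t u v} ≤ d)
    (hsym : ∀ (t : Fin (n + 1) → X) (σ : Equiv.Perm (Fin (n + 1))) (u v : Fin (n + 1) → Bool),
      o (t ∘ σ) (u ∘ σ) (v ∘ σ) ↔ o t u v) :
    (∀ t : Fin (n + 1) → X,
        (∑ i : Fin (n + 1),
            if o t (fun j => fstar (t j))
                (Function.update (fun j => fstar (t j)) i (!(fstar (t i))))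
            then (1 : ℝ) else 0) / (n + 1) ≤ d / (n + 1)) ∧
      (∑ s : Fin n → X, (∏ j, P (s j)) *
          rho P
            (fun x =>
              if o ((Fin.snoc s x : Fin (n+1) → X)) (fun j => fstar ((Fin.snoc s x : Fin (n+1) → X) j))
                  (Function.update (fun j => fstar ((Fin.snoc s x : Fin (n+1) → X) j)) (Fin.last n)
                    (!(fstar x)))
              then !(fstar x) else fstar x)
            fstar) ≤ d / (n + 1) := by
  classical
  have npos : (0 : ℝ) < (n : ℝ) + 1 := by positivity
  -- the error indicator
  set Err : (Fin (n + 1) → X) → Fin (n + 1) → ℝ := fun t i =>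
    if o t (fun j => fstar (t j))
        (Function.update (fun j => fstar (t j)) i (!(fstar (t i)))) then 1 else 0 with hErrDef
  have key1 : ∀ t : Fin (n + 1) → X, (∑ i : Fin (n + 1), Err t i) ≤ d := by
    intro t
    exact aux_count (fun j => fstar (t j)) (o t (fun j => fstar (t j))) (hdeg t _)
  have prodnn : ∀ t : Fin (n + 1) → X, (0 : ℝ) ≤ ∏ j, P (t j) := fun t =>
    Finset.prod_nonneg fun j _ => hP _
  -- the per-coordinate expected error
  set A : Fin (n + 1) → ℝ := fun i => ∑ t : Fin (n + 1) → X, (∏ j, P (t j)) * Err t i with hA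
  -- symmetry: A is constant
  have hAconst : ∀ i : Fin (n + 1), A i = A (Fin.last n) := by
    intro i
    set σ : Equiv.Perm (Fin (n + 1)) := Equiv.swap i (Fin.last n) with hσ
    have hbij : Function.Bijective (fun t : Fin (n + 1) → X => t ∘ σ) := by
      constructor
      · intro a b h
        funext j
        have := congrFun h (σ.symm j)
        simpa using this
      · intro b
        exact ⟨b ∘ ⇑σ.symm, by funext j; simp⟩
    refine Fintype.sum_bijective _ hbij _ _ ?_
    intro t
    have hσl : σ (Fin.last n) = i := Equiv.swap_apply_right i (Fin.last n)
    have hσsi : σ.symm i = Fin.last n := by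
      rw [Equiv.symm_swap]; exact Equiv.swap_apply_left i (Fin.last n)
    congr 1
    · exact (Equiv.prod_comp σ (fun j => P (t j))).symm
    · -- Err t i = Err (t ∘ σ) (Fin.last n)
      have h2 : Function.update (fun j => fstar (t j)) i (!(fstar (t i))) ∘ ⇑σ
          = Function.update ((fun j => fstar (t j)) ∘ ⇑σ) (Fin.last n) (!(fstar ((t ∘ ⇑σ) (Fin.last n)))) := by
        rw [Function.update_comp_equiv, hσsi]
        simp only [Function.comp_apply, hσl]
      have hcond : o (t ∘ ⇑σ) (fun j => fstar ((t ∘ ⇑σ) j))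
          (Function.update (fun j => fstar ((t ∘ ⇑σ) j)) (Fin.last n) (!(fstar ((t ∘ ⇑σ) (Fin.last n)))))
          ↔ o t (fun j => fstar (t j)) (Function.update (fun j => fstar (t j)) i (!(fstar (t i)))) := by
        have := hsym t σ (fun j => fstar (t j)) (Function.update (fun j => fstar (t j)) i (!(fstar (t i))))
        rw [h2] at this
        exact this
      simp only [hErrDef]
      rw [if_congr hcond.symm rfl rfl]
  -- total mass is 1
  have htot1 : (∑ t : Fin (n + 1) → X, ∏ j, P (t j)) = 1 := by
    rw [← Fintype.piFinset_univ, ← Finset.prod_univ_sum]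
    simp [hP1]
  -- the bound on A (last n)
  have hAbound : A (Fin.last n) ≤ d / (n + 1) := by
    rw [le_div_iff₀ npos]
    have h1 : A (Fin.last n) * ((n : ℝ) + 1) = ∑ i : Fin (n + 1), A i := by
      rw [Finset.sum_congr rfl fun i _ => hAconst i]
      simp [mul_comm, Finset.sum_const, Finset.card_univ]
    rw [h1, Finset.sum_comm]
    calc ∑ t : Fin (n + 1) → X, ∑ i : Fin (n + 1), (∏ j, P (t j)) * Err t i
        = ∑ t : Fin (n + 1) → X, (∏ j, P (t j)) * ∑ i : Fin (n + 1), Err t i := by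
          simp [Finset.mul_sum]
      _ ≤ ∑ t : Fin (n + 1) → X, (∏ j, P (t j)) * d := by
          refine Finset.sum_le_sum fun t _ => ?_
          exact mul_le_mul_of_nonneg_left (key1 t) (prodnn t)
      _ = d := by rw [← Finset.sum_mul, htot1, one_mul]
  constructor
  · intro t
    gcongr
    exact key1 t
  · -- expected risk equals A (last n)
    have hrho : ∀ s : Fin n → X,
        rho P
          (fun x =>
            if o ((Fin.snoc s x : Fin (n+1) → X)) (fun j => fstar ((Fin.snoc s x : Fin (n+1) → X) j))
                (Function.update (fun j => fstar ((Fin.snoc s x : Fin (n+1) → X) j)) (Fin.last n)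
                  (!(fstar x)))
            then !(fstar x) else fstar x)
          fstar
        = ∑ x : X, P x * Err (Fin.snoc s x) (Fin.last n) := by
      intro s
      rw [rho, Finset.sum_filter]
      refine Finset.sum_congr rfl fun x _ => ?_
      have hx : fstar ((Fin.snoc s x : Fin (n+1) → X) (Fin.last n)) = fstar x := by
        rw [Fin.snoc_last]
      simp only [hErrDef, hx, mul_ite, mul_one, mul_zero]
      by_cases hc : o ((Fin.snoc s x : Fin (n+1) → X)) (fun j => fstar ((Fin.snoc s x : Fin (n+1) → X) j))
          (Function.update (fun j => fstar ((Fin.snoc s x : Fin (n+1) → X) j)) (Fin.last n)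
            (!(fstar x)))
      · simp [hc]
      · simp [hc]
    calc (∑ s : Fin n → X, (∏ j, P (s j)) *
          rho P _ fstar)
        = ∑ s : Fin n → X, ∑ x : X, (∏ j : Fin (n + 1), P ((Fin.snoc s x : Fin (n+1) → X) j)) * Err (Fin.snoc s x) (Fin.last n) := by
          refine Finset.sum_congr rfl fun s _ => ?_
          rw [hrho s, Finset.mul_sum]
          refine Finset.sum_congr rfl fun x _ => ?_
          rw [Fin.prod_univ_castSucc]
          simp only [Fin.snoc_castSucc, Fin.snoc_last]
          ring
      _ = A (Fin.last n) := by
          rw [hA]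
          have hbij : Function.Bijective (fun p : (Fin n → X) × X => (Fin.snoc p.1 p.2 : Fin (n+1) → X)) := by
            constructor
            · intro a b h
              have h1 : a.1 = b.1 := by
                funext j
                have := congrFun h j.castSucc
                simpa using this
              have h2 : a.2 = b.2 := by
                have := congrFun h (Fin.last n)
                simpa using this
              exact Prod.ext h1 h2
            · intro t
              exact ⟨(Fin.init t, t (Fin.last n)), Fin.snoc_init_self t⟩
          exact (Fintype.sum_prod_type (fun p : (Fin n → X) × X =>
            (∏ j : Fin (n + 1), P ((Fin.snoc p.1 p.2 : Fin (n+1) → X) j)) *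
              Err (Fin.snoc p.1 p.2) (Fin.last n))).symm.trans
            (Fintype.sum_bijective _ hbij _ _ fun p => rfl)
      _ ≤ d / (n + 1) := hAbound
end
end

section
/- (Orientation lemma) For any finite sample S ⊆ X, the one-inclusion graph on F|_S induced by a class F of VC-dimension at most d admits an orientation of its edges such that every vertex has out-degree at most d. -/
open scoped Classical

noncomputable section

/-- A coordinate set `I` is shattered by `V ⊆ {0,1}^m`. -/
def CubeShatters {m : ℕ} (V : Finset (Fin m → Bool)) (I : Finset (Fin m)) : Prop :=
  ∀ g : Fin m → Bool, ∃ v ∈ V, ∀ i ∈ I, v i = g i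

/-!
Orienting the one-inclusion graph with out-degrees at most `d` amounts to assigning every edge to
one of its endpoints so that no vertex receives more than `d` edges. By Hall's theorem, applied
with every vertex copied `d` times, this is possible as soon as every vertex set `T` spans at most
`d * #T` edges. That density bound is Haussler's induction on the dimension: splitting `W` along
the first coordinate into fibers `W₀`, `W₁`, the edges `E(W)` are those of `W₀`, those of `W₁`, and
one for each point of `W₀ ∩ W₁`. Since `#E(W₀) + #E(W₁) ≤ #E(W₀ ∪ W₁) + #E(W₀ ∩ W₁)`, and the sets
`W₀ ∪ W₁`, `W₀ ∩ W₁` have VC-dimension at most `d` and `d - 1`, this gives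
`#E(W) ≤ d * (#W₀ + #W₁) = d * #W`.
-/

open Finset

namespace SimpleGraph

variable {V : Type*} [DecidableEq V] (G : SimpleGraph V) [Fintype G.edgeSet] {d : ℕ}

theorem exists_injective_endpoint_of_card_edges_le
    (hG : ∀ T : Finset V, #(G.edgeFinset ∩ T.sym2) ≤ d * #T) :
    ∃ f : G.edgeSet → V × Fin d,
      Function.Injective f ∧ ∀ e : G.edgeSet, (f e).1 ∈ (e : Sym2 V) := by
  suffices hall : ∀ s : Finset G.edgeSet,
      #s ≤ #(s.biUnion fun e => (e : Sym2 V).toFinset ×ˢ (univ : Finset (Fin d))) by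
    obtain ⟨f, hf, hft⟩ := (all_card_le_biUnion_card_iff_exists_injective _).1 hall
    exact ⟨f, hf, fun e => Sym2.mem_toFinset.1 (mem_product.1 (hft e)).1⟩
  intro s
  set T := s.biUnion fun e => (e : Sym2 V).toFinset
  have hsT : s.map (Function.Embedding.subtype _) ⊆ G.edgeFinset ∩ T.sym2 := by
    intro e he
    obtain ⟨e, hs, rfl⟩ := mem_map.1 he
    refine mem_inter.2 ⟨G.mem_edgeFinset.2 e.2, mem_sym2_iff.2 fun v hv => ?_⟩
    exact mem_biUnion.2 ⟨e, hs, Sym2.mem_toFinset.2 hv⟩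
  have hprod : (s.biUnion fun e => (e : Sym2 V).toFinset ×ˢ (univ : Finset (Fin d))) =
      T ×ˢ univ := by
    ext; simp [T]
  calc #s = #(s.map (Function.Embedding.subtype _)) := (card_map _).symm
    _ ≤ d * #T := (card_le_card hsT).trans (hG T)
    _ = _ := by rw [hprod, card_product, card_univ, Fintype.card_fin, mul_comm]

theorem exists_orientation_of_card_edges_le
    (hG : ∀ T : Finset V, #(G.edgeFinset ∩ T.sym2) ≤ d * #T) :
    ∃ o : V → V → Prop, (∀ u v, o u v → G.Adj u v) ∧ (∀ u v, G.Adj u v → (o u v ↔ ¬ o v u)) ∧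
      ∀ u, Set.ncard {v | o u v} ≤ d := by
  obtain ⟨f, hf, hfe⟩ := G.exists_injective_endpoint_of_card_edges_le hG
  let edge (u v : V) (h : G.Adj u v) : G.edgeSet := ⟨s(u, v), h⟩
  refine ⟨fun u v => ∃ h : G.Adj u v, (f (edge u v h)).1 = u, fun u v ⟨h, _⟩ => h, ?_, ?_⟩
  · intro u v h
    have hswap : edge v u h.symm = edge u v h := Subtype.ext Sym2.eq_swap
    rcases Sym2.mem_iff.1 (hfe (edge u v h)) with hu | hv
    · simp [h, h.symm, hswap, hu, h.ne]
    · simp [h, h.symm, hswap, hv, h.ne.symm]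
  · intro u
    let out (v : {v | ∃ h : G.Adj u v, (f (edge u v h)).1 = u}) : Fin d :=
      (f (edge u v v.2.choose)).2
    have hout : Function.Injective out := by
      rintro ⟨v, hv⟩ ⟨w, hw⟩ hvw
      have hfvw : f (edge u v hv.choose) = f (edge u w hw.choose) :=
        Prod.ext (hv.choose_spec.trans hw.choose_spec.symm) hvw
      exact Subtype.ext (Sym2.congr_right.1 (congrArg Subtype.val (hf hfvw)))
    rw [← Nat.card_coe_set_eq]
    simpa using Nat.card_le_card_of_injective out hout

end SimpleGraph

section CubeShatters

variable {m : ℕ}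

theorem CubeShatters.mono {W W' : Finset (Fin m → Bool)} (h : W ⊆ W') {I : Finset (Fin m)}
    (hW : CubeShatters W I) : CubeShatters W' I := fun g =>
  let ⟨v, hv, hvg⟩ := hW g
  ⟨v, h hv, hvg⟩

theorem cubeShatters_empty_iff {W : Finset (Fin m → Bool)} : CubeShatters W ∅ ↔ W.Nonempty := by
  simp [CubeShatters, Finset.Nonempty]

end CubeShatters

namespace BoolCube

variable {m : ℕ}

def flipAt (u : Fin m → Bool) (i : Fin m) : Fin m → Bool := Function.update u i (!u i)

@[simp]
theorem flipAt_apply_self (u : Fin m → Bool) (i : Fin m) : flipAt u i i = !u i := by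
  simp [flipAt]

@[simp]
theorem flipAt_flipAt (u : Fin m → Bool) (i : Fin m) : flipAt (flipAt u i) i = u := by
  simp [flipAt]

theorem flipAt_ne_self (u : Fin m → Bool) (i : Fin m) : flipAt u i ≠ u :=
  fun h => by simpa using congrFun h i

@[simp]
theorem flipAt_cons_zero (b : Bool) (w : Fin m → Bool) :
    flipAt (Fin.cons b w : Fin (m + 1) → Bool) 0 = Fin.cons (!b) w := by
  simp [flipAt, Fin.update_cons_zero]

@[simp]
theorem flipAt_cons_succ (b : Bool) (w : Fin m → Bool) (j : Fin m) :
    flipAt (Fin.cons b w : Fin (m + 1) → Bool) j.succ = Fin.cons b (flipAt w j) := by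
  simp [flipAt, Fin.cons_update]

def oneInclusionGraph (V : Finset (Fin m → Bool)) : SimpleGraph (Fin m → Bool) where
  Adj u v := u ∈ V ∧ v ∈ V ∧ ∃ i, v = flipAt u i
  symm := ⟨by
    rintro u v ⟨hu, hv, i, rfl⟩
    exact ⟨hv, hu, i, (flipAt_flipAt u i).symm⟩⟩
  loopless := ⟨fun u ⟨_, _, i, h⟩ => flipAt_ne_self u i h.symm⟩

@[simp]
theorem oneInclusionGraph_adj {V : Finset (Fin m → Bool)} {u v : Fin m → Bool} :
    (oneInclusionGraph V).Adj u v ↔ u ∈ V ∧ v ∈ V ∧ ∃ i, v = flipAt u i :=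
  Iff.rfl

/-- Each edge of the one-inclusion graph on `W` is recorded once, as its endpoint with a `false`
in the direction of the edge, together with that direction. -/
def lowerEdges (W : Finset (Fin m → Bool)) : Finset ((Fin m → Bool) × Fin m) :=
  (W ×ˢ univ).filter fun p => p.1 p.2 = false ∧ flipAt p.1 p.2 ∈ W

@[simp]
theorem mem_lowerEdges {W : Finset (Fin m → Bool)} {p : (Fin m → Bool) × Fin m} :
    p ∈ lowerEdges W ↔ p.1 ∈ W ∧ p.1 p.2 = false ∧ flipAt p.1 p.2 ∈ W := by
  simp [lowerEdges]

theorem edgeFinset_oneInclusionGraph_subset (W : Finset (Fin m → Bool)) :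
    (oneInclusionGraph W).edgeFinset ⊆ (lowerEdges W).image fun p => s(p.1, flipAt p.1 p.2) := by
  intro e he
  induction e using Sym2.inductionOn with | hf u v => ?_
  obtain ⟨hu, hv, i, rfl⟩ := (SimpleGraph.mem_edgeSet _).1 (SimpleGraph.mem_edgeFinset.1 he)
  rw [mem_image]
  cases hui : u i
  · exact ⟨(u, i), mem_lowerEdges.2 ⟨hu, hui, hv⟩, rfl⟩
  · exact ⟨(flipAt u i, i), by simp [hu, hv, hui], by simp [Sym2.eq_swap]⟩

theorem card_edgeFinset_oneInclusionGraph_le (W : Finset (Fin m → Bool)) :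
    #(oneInclusionGraph W).edgeFinset ≤ #(lowerEdges W) :=
  (card_le_card (edgeFinset_oneInclusionGraph_subset W)).trans card_image_le

theorem edgeFinset_oneInclusionGraph_inter_sym2 (V T : Finset (Fin m → Bool)) :
    (oneInclusionGraph V).edgeFinset ∩ T.sym2 = (oneInclusionGraph (V ∩ T)).edgeFinset := by
  ext e
  induction e using Sym2.inductionOn with | hf u v => ?_
  simp only [mem_inter, SimpleGraph.mem_edgeFinset, SimpleGraph.mem_edgeSet, mem_sym2_iff,
    Sym2.mem_iff, forall_eq_or_imp, forall_eq, oneInclusionGraph_adj]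
  tauto

theorem lowerEdges_mono {W W' : Finset (Fin m → Bool)} (h : W ⊆ W') :
    lowerEdges W ⊆ lowerEdges W' := by
  intro p
  simp only [mem_lowerEdges]
  exact fun ⟨hp, hf, hflip⟩ => ⟨h hp, hf, h hflip⟩

theorem card_lowerEdges_add_le (A B : Finset (Fin m → Bool)) :
    #(lowerEdges A) + #(lowerEdges B) ≤ #(lowerEdges (A ∪ B)) + #(lowerEdges (A ∩ B)) := by
  rw [← card_union_add_card_inter]
  gcongr
  · exact union_subset (lowerEdges_mono subset_union_left) (lowerEdges_mono subset_union_right)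
  · intro p
    simp only [mem_inter, mem_lowerEdges]
    tauto

def fiber (W : Finset (Fin (m + 1) → Bool)) (b : Bool) : Finset (Fin m → Bool) :=
  W.preimage (Fin.cons (α := fun _ => Bool) b) (Fin.cons_right_injective _).injOn

@[simp]
theorem mem_fiber {W : Finset (Fin (m + 1) → Bool)} {b : Bool} {w : Fin m → Bool} :
    w ∈ fiber W b ↔ (Fin.cons b w : Fin (m + 1) → Bool) ∈ W :=
  mem_preimage

theorem card_fiber_add_card_fiber (W : Finset (Fin (m + 1) → Bool)) :
    #(fiber W false) + #(fiber W true) = #W := by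
  have hfiber (b : Bool) : #(fiber W b) = #{v ∈ W | v 0 = b} :=
    card_nbij' (Fin.cons (α := fun _ => Bool) b) Fin.tail (fun w hw => by simpa using hw)
      (fun v hv => by
        obtain ⟨hv, rfl⟩ := mem_filter.1 hv
        simpa [Fin.cons_self_tail] using hv)
      (fun w _ => Fin.tail_cons _ _)
      (fun v hv => by
        obtain ⟨-, rfl⟩ := mem_filter.1 hv
        exact Fin.cons_self_tail v)
  rw [card_eq_sum_card_fiberwise (f := fun v : Fin (m + 1) → Bool => v 0) (t := univ)
    (fun _ _ => mem_univ _), Fintype.sum_bool, hfiber, hfiber, add_comm]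

theorem lowerEdges_subset_fibers (W : Finset (Fin (m + 1) → Bool)) :
    lowerEdges W ⊆
      (lowerEdges (fiber W false)).image (fun p => (Fin.cons false p.1, p.2.succ)) ∪
      (lowerEdges (fiber W true)).image (fun p => (Fin.cons true p.1, p.2.succ)) ∪
      (fiber W false ∩ fiber W true).image (fun w => (Fin.cons false w, 0)) := by
  rintro ⟨v, i⟩ hvi
  obtain ⟨b, w, rfl⟩ : ∃ b w, v = Fin.cons b w := ⟨v 0, Fin.tail v, (Fin.cons_self_tail v).symm⟩
  cases i using Fin.cases <;> cases b <;> simp_all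

theorem card_lowerEdges_le_fibers (W : Finset (Fin (m + 1) → Bool)) :
    #(lowerEdges W) ≤ #(lowerEdges (fiber W false)) + #(lowerEdges (fiber W true)) +
      #(fiber W false ∩ fiber W true) :=
  (card_le_card (lowerEdges_subset_fibers W)).trans <|
    (card_union_le _ _).trans <| add_le_add ((card_union_le _ _).trans
      (add_le_add card_image_le card_image_le)) card_image_le

theorem cubeShatters_map_succ_of_fiber_union {W : Finset (Fin (m + 1) → Bool)}
    {I : Finset (Fin m)} (h : CubeShatters (fiber W false ∪ fiber W true) I) :
    CubeShatters W (I.map (Fin.succEmb m)) := by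
  intro g
  obtain ⟨w, hw, hwg⟩ := h (Fin.tail g)
  obtain ⟨b, hb⟩ : ∃ b : Bool, (Fin.cons b w : Fin (m + 1) → Bool) ∈ W := by
    simpa [or_comm] using hw
  exact ⟨Fin.cons b w, hb, by simpa [Fin.tail] using hwg⟩

theorem cubeShatters_insert_zero_of_fiber_inter {W : Finset (Fin (m + 1) → Bool)}
    {I : Finset (Fin m)} (h : CubeShatters (fiber W false ∩ fiber W true) I) :
    CubeShatters W (insert 0 (I.map (Fin.succEmb m))) := by
  intro g
  obtain ⟨w, hw, hwg⟩ := h (Fin.tail g)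
  refine ⟨Fin.cons (g 0) w, ?_, by simpa [Fin.tail] using hwg⟩
  cases g 0 <;> simp_all

theorem card_lowerEdges_le_mul_card {d : ℕ} (W : Finset (Fin m → Bool))
    (hW : ∀ I, CubeShatters W I → #I ≤ d) : #(lowerEdges W) ≤ d * #W := by
  induction m generalizing d with
  | zero => simp [lowerEdges]
  | succ m ih =>
    set W₀ := fiber W false
    set W₁ := fiber W true
    have hunion : #(lowerEdges (W₀ ∪ W₁)) ≤ d * #(W₀ ∪ W₁) :=
      ih _ fun I hI => by simpa using hW _ (cubeShatters_map_succ_of_fiber_union hI)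
    have hinter : #(lowerEdges (W₀ ∩ W₁)) + #(W₀ ∩ W₁) ≤ d * #(W₀ ∩ W₁) := by
      have hW_inter (I) (hI : CubeShatters (W₀ ∩ W₁) I) : #I + 1 ≤ d := by
        simpa [card_insert_of_notMem, Fin.succ_ne_zero] using
          hW _ (cubeShatters_insert_zero_of_fiber_inter hI)
      rcases (W₀ ∩ W₁).eq_empty_or_nonempty with hempty | hne
      · simp [hempty, lowerEdges]
      have hd : 1 ≤ d := by simpa using hW_inter ∅ (cubeShatters_empty_iff.2 hne)
      obtain ⟨d, rfl⟩ := Nat.exists_eq_add_of_le' hd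
      have := ih (d := d) _ fun I hI => by simpa using hW_inter I hI
      linarith
    calc #(lowerEdges W)
        ≤ #(lowerEdges W₀) + #(lowerEdges W₁) + #(W₀ ∩ W₁) := card_lowerEdges_le_fibers W
      _ ≤ #(lowerEdges (W₀ ∪ W₁)) + #(lowerEdges (W₀ ∩ W₁)) + #(W₀ ∩ W₁) :=
          Nat.add_le_add_right (card_lowerEdges_add_le W₀ W₁) _
      _ ≤ d * (#(W₀ ∪ W₁) + #(W₀ ∩ W₁)) := by linarith
      _ = d * #W := by rw [card_union_add_card_inter, card_fiber_add_card_fiber]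

end BoolCube

open BoolCube in
/-- Orientation lemma: the one-inclusion graph on a set `V` of binary vectors of
VC-dimension at most `d` (edges join vectors at Hamming distance exactly 1) admits an
orientation of its edges with all out-degrees at most `d`. -/
theorem one_inclusion_orientation {m d : ℕ} (V : Finset (Fin m → Bool))
    (hVC : ∀ I : Finset (Fin m), CubeShatters V I → I.card ≤ d) :
    ∃ o : (Fin m → Bool) → (Fin m → Bool) → Prop,
      (∀ u v, o u v → u ∈ V ∧ v ∈ V ∧ ∃ i, v = Function.update u i (!u i)) ∧
      (∀ u ∈ V, ∀ v ∈ V, (∃ i, v = Function.update u i (!u i)) → (o u v ↔ ¬ o v u)) ∧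
      (∀ u, Set.ncard {v | o u v} ≤ d) := by
  have hdensity (T : Finset (Fin m → Bool)) :
      #((oneInclusionGraph V).edgeFinset ∩ T.sym2) ≤ d * #T := by
    rw [edgeFinset_oneInclusionGraph_inter_sym2]
    calc _ ≤ #(lowerEdges (V ∩ T)) := card_edgeFinset_oneInclusionGraph_le _
      _ ≤ d * #(V ∩ T) :=
        card_lowerEdges_le_mul_card _ fun I hI => hVC I (hI.mono inter_subset_left)
      _ ≤ d * #T := Nat.mul_le_mul_left d (card_le_card inter_subset_right)
  obtain ⟨o, hadj, hanti, hdeg⟩ :=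
    (oneInclusionGraph V).exists_orientation_of_card_edges_le hdensity
  exact ⟨o, hadj, fun u hu v hv huv => hanti u v ⟨hu, hv, huv⟩, hdeg⟩
end
end

section
/- Every subgraph of the one-inclusion graph of a class of VC-dimension at most d satisfies |E| ≤ d·|V|. -/
/-!
Induction on the number of coordinates. Split `V ⊆ {0,1}^(m+1)` by the last coordinate into the
slices `V₀, V₁ ⊆ {0,1}^m`. An edge of `V` either lies inside a slice, or crosses the last
coordinate at a point of `V₀ ∩ V₁`. Since `E(V₀) + E(V₁) ≤ E(V₀ ∪ V₁) + E(V₀ ∩ V₁)`, and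
`V₀ ∪ V₁` has VC-dimension at most `d` while `V₀ ∩ V₁` has VC-dimension at most `d - 1`
(a set it shatters, together with the last coordinate, is shattered by `V`), the induction
hypothesis gives `|E(V)| ≤ 2d|V₀ ∪ V₁| + 2(d-1)|V₀ ∩ V₁| + 2|V₀ ∩ V₁| = 2d(|V₀| + |V₁|) = 2d|V|`.
-/

open scoped Classical

noncomputable section

namespace OneInclusion

open Finset

variable {m : ℕ}

/-- Ordered pairs of adjacent vertices, so that each edge is counted twice. -/
def edges (V : Finset (Fin m → Bool)) : Finset ((Fin m → Bool) × (Fin m → Bool)) :=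
  (V ×ˢ V).filter (fun p => ∃ i, p.2 = Function.update p.1 i (!p.1 i))

lemma edges_mono {A B : Finset (Fin m → Bool)} (h : A ⊆ B) : edges A ⊆ edges B :=
  filter_subset_filter _ (product_subset_product h h)

lemma edges_inter (A B : Finset (Fin m → Bool)) : edges (A ∩ B) = edges A ∩ edges B := by
  simp only [edges, ← filter_inter_distrib, product_inter_product]

lemma card_edges_add_card_edges_le (A B : Finset (Fin m → Bool)) :
    #(edges A) + #(edges B) ≤ #(edges (A ∪ B)) + #(edges (A ∩ B)) := by
  rw [← card_union_add_card_inter, edges_inter]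
  gcongr
  exact union_subset (edges_mono subset_union_left) (edges_mono subset_union_right)

lemma snoc_adj_snoc_iff {w w' : Fin m → Bool} {b b' : Bool} :
    (∃ i, (Fin.snoc w' b' : Fin (m + 1) → Bool) =
        Function.update (Fin.snoc w b) i (!(Fin.snoc w b : Fin (m + 1) → Bool) i)) ↔
      (b' = b ∧ ∃ j, w' = Function.update w j (!w j)) ∨ (w' = w ∧ b' = !b) := by
  constructor
  · rintro ⟨i, h⟩
    induction i using Fin.lastCases with
    | last => rw [Fin.snoc_last, Fin.update_snoc_last, Fin.snoc_inj] at h; exact .inr h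
    | cast j =>
      rw [Fin.snoc_castSucc, ← Fin.snoc_update, Fin.snoc_inj] at h
      exact .inl ⟨h.2, j, h.1⟩
  · rintro (⟨rfl, j, rfl⟩ | ⟨rfl, rfl⟩)
    · exact ⟨j.castSucc, by rw [Fin.snoc_castSucc, Fin.snoc_update]⟩
    · exact ⟨Fin.last m, by rw [Fin.snoc_last, Fin.update_snoc_last]⟩

def slice (V : Finset (Fin (m + 1) → Bool)) (b : Bool) : Finset (Fin m → Bool) :=
  univ.filter (fun w => Fin.snoc w b ∈ V)

@[simp]
lemma mem_slice {V : Finset (Fin (m + 1) → Bool)} {b : Bool} {w : Fin m → Bool} :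
    w ∈ slice V b ↔ Fin.snoc w b ∈ V := by
  simp [slice]

lemma card_slice (V : Finset (Fin (m + 1) → Bool)) (b : Bool) :
    #(slice V b) = #(V.filter (fun v => v (Fin.last m) = b)) := by
  refine card_nbij' (fun w => Fin.snoc w b) Fin.init ?_ ?_ ?_ ?_
  · intro w hw; simpa using hw
  · intro v hv
    rw [mem_coe, mem_filter] at hv
    simpa [← hv.2] using hv.1
  · intro w _; simp
  · intro v hv
    rw [mem_coe, mem_filter] at hv
    simp [← hv.2]

lemma card_slice_add_card_slice (V : Finset (Fin (m + 1) → Bool)) :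
    #(slice V false) + #(slice V true) = #V := by
  rw [card_eq_sum_card_fiberwise (s := V) (f := fun v => v (Fin.last m)) (t := univ)
    fun _ _ => mem_coe.2 (mem_univ _), Fintype.sum_bool, add_comm, card_slice, card_slice]

lemma edges_subset_slice (V : Finset (Fin (m + 1) → Bool)) :
    edges V ⊆ (univ.biUnion fun b => (edges (slice V b)).image
        fun q => (Fin.snoc q.1 b, Fin.snoc q.2 b)) ∪
      ((slice V false ∩ slice V true) ×ˢ univ).image
        fun q => (Fin.snoc q.1 q.2, Fin.snoc q.1 !q.2) := by
  rintro ⟨u, v⟩ huv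
  rw [← Fin.snoc_init_self u, ← Fin.snoc_init_self v] at huv ⊢
  simp only [edges, mem_filter, mem_product, snoc_adj_snoc_iff] at huv
  obtain ⟨⟨hu, hv⟩, ⟨hb, hj⟩ | ⟨hw, hb⟩⟩ := huv
  · refine mem_union_left _ (mem_biUnion.2 ⟨u (Fin.last m), mem_univ _, mem_image.2 ?_⟩)
    refine ⟨(Fin.init u, Fin.init v), ?_, by rw [hb]⟩
    simp only [edges, mem_filter, mem_product, mem_slice]
    exact ⟨⟨hu, hb ▸ hv⟩, hj⟩
  · refine mem_union_right _ (mem_image.2 ⟨(Fin.init u, u (Fin.last m)), ?_, by rw [hw, hb]⟩)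
    rw [hw, hb] at hv
    cases h : u (Fin.last m) <;> simp_all

lemma card_edges_le_card_edges_slice (V : Finset (Fin (m + 1) → Bool)) :
    #(edges V) ≤ #(edges (slice V false)) + #(edges (slice V true)) +
      2 * #(slice V false ∩ slice V true) :=
  calc #(edges V)
      ≤ ∑ b, #(edges (slice V b)) + #(slice V false ∩ slice V true) * 2 :=
        (card_le_card (edges_subset_slice V)).trans <| (card_union_le _ _).trans <|
          add_le_add (card_biUnion_le.trans (sum_le_sum fun _ _ => card_image_le))
            (card_image_le.trans_eq (by simp))
    _ = _ := by rw [Fintype.sum_bool]; ring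

lemma CubeShatters.of_slice_union {V : Finset (Fin (m + 1) → Bool)} {I : Finset (Fin m)}
    (h : CubeShatters (slice V false ∪ slice V true) I) :
    CubeShatters V (I.map Fin.castSuccEmb) := by
  intro g
  obtain ⟨w, hw, hwg⟩ := h (Fin.init g)
  obtain ⟨b, hb⟩ : ∃ b, Fin.snoc w b ∈ V := by simpa [or_comm] using hw
  exact ⟨_, hb, by simpa [Fin.init] using hwg⟩

lemma CubeShatters.of_slice_inter {V : Finset (Fin (m + 1) → Bool)} {I : Finset (Fin m)}
    (h : CubeShatters (slice V false ∩ slice V true) I) :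
    CubeShatters V (insert (Fin.last m) (I.map Fin.castSuccEmb)) := by
  intro g
  obtain ⟨w, hw, hwg⟩ := h (Fin.init g)
  refine ⟨Fin.snoc w (g (Fin.last m)), ?_, ?_⟩
  · cases g (Fin.last m) <;> simp_all
  · simpa [Fin.init] using hwg

theorem card_edges_le : ∀ {m d : ℕ} (V : Finset (Fin m → Bool)),
    (∀ I, CubeShatters V I → #I ≤ d) → #(edges V) ≤ 2 * d * #V
  | 0, _, V, _ => by simp [edges]
  | m + 1, d, V, hVC => by
    have hsub := card_edges_add_card_edges_le (slice V false) (slice V true)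
    set W := slice V false ∩ slice V true
    have hP := card_edges_le (slice V false ∪ slice V true) fun I hI => by
      simpa using hVC _ (CubeShatters.of_slice_union hI)
    have hW : #(edges W) + 2 * #W ≤ 2 * d * #W := by
      have hVCW (I) (hI : CubeShatters W I) : #I + 1 ≤ d := by
        simpa using hVC _ (CubeShatters.of_slice_inter hI)
      cases d with
      | zero =>
        -- a nonempty `W` shatters `∅`, so `V` would shatter `{Fin.last m}`
        have hW : W = ∅ := eq_empty_of_forall_notMem fun w hw =>
          absurd (hVCW ∅ fun _ => ⟨w, hw, by simp⟩) (by simp)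
        simp [hW, edges]
      | succ d =>
        have := card_edges_le W fun I hI => Nat.le_of_succ_le_succ (hVCW I hI)
        linarith
    calc #(edges V)
        ≤ #(edges (slice V false)) + #(edges (slice V true)) + 2 * #W :=
          card_edges_le_card_edges_slice V
      _ ≤ #(edges (slice V false ∪ slice V true)) + #(edges W) + 2 * #W := by omega
      _ ≤ 2 * d * (#(slice V false ∪ slice V true) + #W) := by linarith
      _ = 2 * d * #V := by rw [card_union_add_card_inter, card_slice_add_card_slice]

end OneInclusion

/-- Every (sub)graph of the one-inclusion graph of a class of VC-dimension at most `d`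
has edge density at most `d`: counting ordered adjacent pairs, `2|E| ≤ 2d|V|`. -/
theorem one_inclusion_edge_density {m d : ℕ} (V : Finset (Fin m → Bool))
    (hVC : ∀ I : Finset (Fin m), CubeShatters V I → I.card ≤ d) :
    ((V ×ˢ V).filter
        (fun p => ∃ i, p.2 = Function.update p.1 i (!p.1 i))).card ≤ 2 * d * V.card :=
  OneInclusion.card_edges_le V hVC
end
end

section
/- (Corollary: capacity-power bound on doubling constant) For any range space (X, R) of VC-dimension d there is an absolute constant c > 0 such that D_ε ≤ (c·τ(ε))^d for all ε ∈ (0,1], where τ is Alexander's capacity and D_ε the doubling constant. -/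
open scoped Classical

noncomputable section

def meas {X : Type*} (P : X → ℝ) (S : Finset X) : ℝ := ∑ x ∈ S, P x

def alexCap {X : Type*} (P : X → ℝ) (R : Finset (Finset X)) (ε : ℝ) : ℝ :=
  sSup {t : ℝ | ∃ ε₀ : ℝ, ε ≤ ε₀ ∧
    t = meas P ((R.filter fun S => meas P S ≤ ε₀).biUnion id) / ε₀}

/-!
Let `U` be the union of the family `Q`. Its members lie in `R` and have measure at most `2ε₀`,
so the capacity gives `P(U) ≤ 2ε₀ τ(ε)`. Conditioned on `U`, the family `Q` is
`ε₀ / P(U)`-separated, and Haussler's packing lemma bounds a `δ`-separated family of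
VC-dimension `d` by `(30/δ)^d`; this gives `(60 τ(ε))^d`.

Haussler's packing lemma: sample `n = ⌈4d/δ⌉` independent points from `P`. Resampling the
`i`-th point, the `c` members of the family with a given trace on the other points span on
average at least `δ(c-1)/2` edges in direction `i` of the one-inclusion graph of the traces
(counted with multiplicities), since any two of them differ on a set of measure at least `δ`.
Summed over `i` this is `nδ/2 (|V| - E[#traces])`, while that graph has at most `d|V|` edges;
hence `|V| ≤ 2 E[#traces]`, and Sauer–Shelah bounds the number of traces by `(en/d)^d`.
-/

open Finset

namespace Finset

variable {α : Type*} [DecidableEq α] {𝒜 ℬ : Finset (Finset α)}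

lemma vcDim_le_of_forall_shatters {d : ℕ} (h : ∀ s, 𝒜.Shatters s → #s ≤ d) : 𝒜.vcDim ≤ d :=
  Finset.sup_le fun s hs => h s (mem_shatterer.1 hs)

lemma vcDim_le_vcDim_of_shatters (h : ∀ s, 𝒜.Shatters s → ℬ.Shatters s) :
    𝒜.vcDim ≤ ℬ.vcDim :=
  vcDim_le_of_forall_shatters fun s hs => (h s hs).card_le_vcDim

lemma vcDim_lt_vcDim_of_shatters_insert {y : α} (h𝒜 : 𝒜.Nonempty)
    (h : ∀ s, 𝒜.Shatters s → y ∉ s ∧ ℬ.Shatters (insert y s)) : 𝒜.vcDim < ℬ.vcDim := by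
  obtain ⟨s, hs, hs_card⟩ := exists_mem_eq_sup _ ⟨∅, mem_shatterer.2 (shatters_empty.2 h𝒜)⟩ card
  obtain ⟨hys, hshat⟩ := h s (mem_shatterer.1 hs)
  calc 𝒜.vcDim = #s := hs_card
    _ < #(insert y s) := by rw [card_insert_of_notMem hys]; omega
    _ ≤ ℬ.vcDim := hshat.card_le_vcDim

end Finset

/-! A family of subsets of `A` with multiplicities is a function `ν : Finset α → ℕ`, read on
`A.powerset`. The one-inclusion graph joins `u` and `insert a u`; with multiplicities, that edge
counts `min (ν u) (ν (insert a u))` times. -/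

namespace WeightedFamily

variable {α : Type*} (A : Finset α) (ν : Finset α → ℕ)

def mass : ℕ := ∑ u ∈ A.powerset, ν u

def supp : Finset (Finset α) := A.powerset.filter (ν · ≠ 0)

variable {A ν}

@[simp] lemma mem_supp {u : Finset α} : u ∈ supp A ν ↔ u ⊆ A ∧ ν u ≠ 0 := by
  rw [supp, mem_filter, mem_powerset]

lemma mass_eq_sum_supp : mass A ν = ∑ u ∈ supp A ν, ν u :=
  (sum_filter_ne_zero _).symm

variable [DecidableEq α] (A ν)

def edgeMassAt (a : α) : ℕ := ∑ u ∈ (A.erase a).powerset, min (ν u) (ν (insert a u))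

def edgeMass : ℕ := ∑ a ∈ A, edgeMassAt A ν a

-- Folding along `y` merges `u` with `insert y u`: the max keeps the VC-dimension, while the min
-- carries the edges in direction `y` and shatters `s` only if `insert y s` was shattered.
def foldMax (y : α) (u : Finset α) : ℕ := max (ν u) (ν (insert y u))

def foldMin (y : α) (u : Finset α) : ℕ := min (ν u) (ν (insert y u))

variable {A ν} {y : α}

lemma mass_insert (hy : y ∉ A) :
    mass (insert y A) ν = mass A (foldMax ν y) + mass A (foldMin ν y) := by
  simp only [mass, sum_powerset_insert hy, ← sum_add_distrib, foldMax, foldMin, max_add_min]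

lemma subset_of_shatters_supp {s : Finset α} (h : (supp A ν).Shatters s) : s ⊆ A := by
  obtain ⟨u, hu, hsu⟩ := h.exists_superset
  exact hsu.trans (mem_supp.1 hu).1

lemma shatters_of_supp_foldMax (hy : y ∉ A) {s : Finset α}
    (h : (supp A (foldMax ν y)).Shatters s) : (supp (insert y A) ν).Shatters s := by
  have hys : y ∉ s := fun hys => hy (subset_of_shatters_supp h hys)
  intro t ht
  obtain ⟨u, hu, rfl⟩ := h ht
  rw [mem_supp, foldMax] at hu
  by_cases hνu : ν u = 0
  · refine ⟨insert y u, ?_, inter_insert_of_notMem hys⟩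
    rw [mem_supp]
    exact ⟨insert_subset_insert y hu.1, by omega⟩
  · exact ⟨u, mem_supp.2 ⟨hu.1.trans (subset_insert y A), hνu⟩, rfl⟩

lemma shatters_insert_of_supp_foldMin (hy : y ∉ A) {s : Finset α}
    (h : (supp A (foldMin ν y)).Shatters s) : (supp (insert y A) ν).Shatters (insert y s) := by
  intro t ht
  obtain ⟨u, hu, hsu⟩ := h (t.erase_subset_erase y ht |>.trans (erase_insert_subset y s))
  rw [mem_supp, foldMin] at hu
  have hyu : y ∉ u := fun hyu => hy (hu.1 hyu)
  by_cases hyt : y ∈ t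
  · refine ⟨insert y u, ?_, ?_⟩
    · rw [mem_supp]
      exact ⟨insert_subset_insert y hu.1, by omega⟩
    · rw [← insert_inter_distrib, hsu, insert_erase hyt]
  · refine ⟨u, ?_, ?_⟩
    · rw [mem_supp]
      exact ⟨hu.1.trans (subset_insert y A), by omega⟩
    · rw [insert_inter_of_notMem hyu, hsu, erase_eq_of_notMem hyt]

lemma edgeMassAt_insert_le (hy : y ∉ A) {a : α} (ha : a ∈ A) :
    edgeMassAt (insert y A) ν a ≤ edgeMassAt A (foldMax ν y) a + edgeMassAt A (foldMin ν y) a := by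
  have hay : a ≠ y := fun h => hy (h ▸ ha)
  have hy' : y ∉ A.erase a := fun h => hy (mem_of_mem_erase h)
  rw [edgeMassAt, erase_insert_of_ne hay.symm, sum_powerset_insert hy', edgeMassAt, edgeMassAt,
    ← sum_add_distrib, ← sum_add_distrib]
  refine sum_le_sum fun u _ => ?_
  simp only [foldMax, foldMin, insert_comm a y]
  omega

lemma edgeMass_insert_le (hy : y ∉ A) :
    edgeMass (insert y A) ν ≤
      mass A (foldMin ν y) + (edgeMass A (foldMax ν y) + edgeMass A (foldMin ν y)) := by
  rw [edgeMass, sum_insert hy, edgeMass, edgeMass, ← sum_add_distrib]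
  gcongr with a ha
  · rw [edgeMassAt, erase_insert hy]; rfl
  · exact edgeMassAt_insert_le hy ha

theorem edgeMass_le_vcDim_mul_mass (A : Finset α) (ν : Finset α → ℕ) :
    edgeMass A ν ≤ (supp A ν).vcDim * mass A ν := by
  induction A using Finset.induction_on generalizing ν with
  | empty => simp [edgeMass]
  | insert y A hy ih =>
    set D := (supp (insert y A) ν).vcDim
    have h_max : (supp A (foldMax ν y)).vcDim ≤ D :=
      vcDim_le_vcDim_of_shatters fun s => shatters_of_supp_foldMax hy
    have h_min : mass A (foldMin ν y) + (supp A (foldMin ν y)).vcDim * mass A (foldMin ν y) ≤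
        D * mass A (foldMin ν y) := by
      rcases (supp A (foldMin ν y)).eq_empty_or_nonempty with h | h
      · simp [mass_eq_sum_supp, h]
      · have := vcDim_lt_vcDim_of_shatters_insert h fun s hs =>
          ⟨fun hys => hy (subset_of_shatters_supp hs hys), shatters_insert_of_supp_foldMin hy hs⟩
        nlinarith
    calc edgeMass (insert y A) ν
        ≤ mass A (foldMin ν y) + (edgeMass A (foldMax ν y) + edgeMass A (foldMin ν y)) :=
          edgeMass_insert_le hy
      _ ≤ mass A (foldMin ν y) + ((supp A (foldMax ν y)).vcDim * mass A (foldMax ν y) +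
            (supp A (foldMin ν y)).vcDim * mass A (foldMin ν y)) := by gcongr <;> apply ih
      _ ≤ D * mass A (foldMax ν y) + D * mass A (foldMin ν y) := by
          nlinarith [Nat.mul_le_mul_right (mass A (foldMax ν y)) h_max]
      _ = D * mass (insert y A) ν := by rw [mass_insert hy, mul_add]

end WeightedFamily

open WeightedFamily

section Trace

variable {ι X : Type*} [Fintype ι]

def trace (ω : ι → X) (S : Finset X) : Finset ι := univ.filter (ω · ∈ S)

@[simp] lemma mem_trace {ω : ι → X} {S : Finset X} {j : ι} : j ∈ trace ω S ↔ ω j ∈ S := by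
  simp [trace]

variable [DecidableEq ι] {V : Finset (Finset X)} {ω : ι → X}

lemma Finset.Shatters.injOn_of_image_trace {s : Finset ι} (h : (V.image (trace ω)).Shatters s) :
    Set.InjOn ω s := by
  intro i hi j hj hij
  obtain ⟨u, hu, hsu⟩ := h.exists_inter_eq_singleton hi
  obtain ⟨S, -, rfl⟩ := mem_image.1 hu
  have hjS : j ∈ s ∩ trace ω S := mem_inter.2 ⟨hj, mem_trace.2 (hij ▸ mem_trace.1
    (mem_of_mem_inter_right (hsu ▸ mem_singleton_self i)))⟩
  rw [hsu, mem_singleton] at hjS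
  exact hjS.symm

lemma Finset.Shatters.image_of_image_trace {s : Finset ι} (h : (V.image (trace ω)).Shatters s) :
    V.Shatters (s.image ω) := by
  intro t ht
  obtain ⟨u, hu, hsu⟩ := h (s.filter_subset (ω · ∈ t))
  obtain ⟨S, hS, rfl⟩ := mem_image.1 hu
  refine ⟨S, hS, ?_⟩
  ext x
  constructor
  · intro hx
    obtain ⟨hx, hxS⟩ := mem_inter.1 hx
    obtain ⟨i, hi, rfl⟩ := mem_image.1 hx
    have : i ∈ s ∩ trace ω S := mem_inter.2 ⟨hi, mem_trace.2 hxS⟩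
    rw [hsu] at this
    exact (mem_filter.1 this).2
  · intro hx
    obtain ⟨i, hi, rfl⟩ := mem_image.1 (ht hx)
    have : i ∈ s ∩ trace ω S := hsu ▸ mem_filter.2 ⟨hi, hx⟩
    exact mem_inter.2 ⟨mem_image_of_mem ω hi, mem_trace.1 (mem_of_mem_inter_right this)⟩

lemma vcDim_image_trace_le : (V.image (trace ω)).vcDim ≤ V.vcDim :=
  vcDim_le_of_forall_shatters fun s h => by
    rw [← card_image_of_injOn h.injOn_of_image_trace]
    exact h.image_of_image_trace.card_le_vcDim

lemma card_image_trace_le {d : ℕ} (hV : V.vcDim ≤ d) :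
    #(V.image (trace ω)) ≤ ∑ k ∈ Iic d, (Fintype.card ι).choose k :=
  (card_le_card_shatterer _).trans <| card_shatterer_le_sum_vcDim.trans <|
    sum_le_sum_of_subset (Iic_subset_Iic.2 (vcDim_image_trace_le.trans hV))

variable (V ω) in
def traceCount (u : Finset ι) : ℕ := #(V.filter (trace ω · = u))

lemma mass_traceCount : mass univ (traceCount V ω) = #V :=
  (card_eq_sum_card_fiberwise fun S _ => mem_powerset.2 (subset_univ (trace ω S))).symm

lemma edgeMass_traceCount_le : edgeMass univ (traceCount V ω) ≤ V.vcDim * #V := by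
  have hsupp : supp univ (traceCount V ω) ⊆ V.image (trace ω) := fun u hu => by
    obtain ⟨S, hS⟩ := card_ne_zero.1 (mem_supp.1 hu).2
    exact mem_image.2 ⟨S, (mem_filter.1 hS).1, (mem_filter.1 hS).2⟩
  calc edgeMass univ (traceCount V ω)
      ≤ (supp univ (traceCount V ω)).vcDim * mass univ (traceCount V ω) :=
        edgeMass_le_vcDim_mul_mass _ _
    _ ≤ V.vcDim * #V := by
        rw [mass_traceCount]
        gcongr
        exact (vcDim_mono hsupp).trans vcDim_image_trace_le

end Trace

lemma Nat.mul_le_add_mul_min (a b : ℕ) : a * b ≤ (a + b) * min a b :=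
  calc a * b = min a b * max a b := (min_mul_max a b).symm
    _ ≤ min a b * (a + b) := Nat.mul_le_mul_left _ (by omega)
    _ = (a + b) * min a b := mul_comm _ _

section Separation

variable {X : Type*}

def IsSeparated (P : X → ℝ) (δ : ℝ) (V : Finset (Finset X)) : Prop :=
  (V : Set (Finset X)).Pairwise fun S T => δ ≤ meas P (symmDiff S T)

lemma IsSeparated.mono {P : X → ℝ} {δ : ℝ} {V W : Finset (Finset X)} (h : IsSeparated P δ V)
    (hWV : W ⊆ V) : IsSeparated P δ W :=
  Set.Pairwise.mono (coe_subset.2 hWV) h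

lemma meas_mono {P : X → ℝ} (hP0 : ∀ x, 0 ≤ P x) {S T : Finset X} (hST : S ⊆ T) :
    meas P S ≤ meas P T :=
  sum_le_sum_of_subset_of_nonneg hST fun x _ _ => hP0 x

lemma IsSeparated.le_meas_of_one_lt_card {P : X → ℝ} {δ : ℝ} {V : Finset (Finset X)}
    (hsep : IsSeparated P δ V) (hP0 : ∀ x, 0 ≤ P x) {U : Finset X} (hVU : ∀ S ∈ V, S ⊆ U)
    (hV : 1 < #V) : δ ≤ meas P U := by
  obtain ⟨S, hS, T, hT, hST⟩ := one_lt_card.1 hV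
  exact (hsep hS hT hST).trans
    (meas_mono hP0 (symmDiff_le_sup.trans (union_subset (hVU S hS) (hVU T hT))))

lemma sum_card_filter_mem_symmDiff (C : Finset (Finset X)) (x : X) :
    ∑ S ∈ C, #(C.filter (x ∈ symmDiff S ·)) = 2 * (#(C.filter (x ∉ ·)) * #(C.filter (x ∈ ·))) := by
  have h : ∀ S, C.filter (x ∈ symmDiff S ·) =
      if x ∈ S then C.filter (x ∉ ·) else C.filter (x ∈ ·) := by
    intro S
    split_ifs with hxS <;> ext T <;> simp [mem_symmDiff, hxS]
  simp_rw [h, apply_ite card, sum_ite, sum_const, smul_eq_mul]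
  ring

variable [Fintype X] (P : X → ℝ)

lemma sum_sum_meas_symmDiff (C : Finset (Finset X)) :
    ∑ S ∈ C, ∑ T ∈ C, meas P (symmDiff S T) =
      2 * ∑ x, P x * (#(C.filter (x ∉ ·)) * #(C.filter (x ∈ ·)) : ℕ) := by
  have h : ∀ A : Finset X, meas P A = ∑ x, if x ∈ A then P x else 0 := fun A => by
    rw [← sum_filter, filter_univ_mem]; rfl
  have hx : ∀ x, ∑ S ∈ C, ∑ T ∈ C, (if x ∈ symmDiff S T then P x else 0) =
      P x * (2 * (#(C.filter (x ∉ ·)) * #(C.filter (x ∈ ·))) : ℕ) := fun x => by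
    simp_rw [← sum_filter, sum_const, nsmul_eq_mul, ← sum_mul, ← Nat.cast_sum,
      sum_card_filter_mem_symmDiff, mul_comm]
  simp_rw [h]
  rw [sum_congr rfl fun S _ => sum_comm, sum_comm]
  simp_rw [hx, mul_sum]
  push_cast
  ring_nf

variable {P} {δ : ℝ} {C : Finset (Finset X)}

lemma IsSeparated.mul_card_mul_card_sub_one_le (hsep : IsSeparated P δ C) :
    δ * (#C * (#C - 1)) ≤ ∑ S ∈ C, ∑ T ∈ C, meas P (symmDiff S T) := by
  have hrow : ∀ S ∈ C, δ * (#C - 1) ≤ ∑ T ∈ C, meas P (symmDiff S T) := fun S hS => by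
    rw [← add_sum_erase C _ hS, symmDiff_self, bot_eq_empty, meas, sum_empty, zero_add]
    have := card_nsmul_le_sum (C.erase S) _ δ fun T hT =>
      hsep hS (mem_of_mem_erase hT) (ne_of_mem_erase hT).symm
    rwa [card_erase_of_mem hS, nsmul_eq_mul, Nat.cast_sub (card_pos.2 ⟨S, hS⟩), Nat.cast_one,
      mul_comm] at this
  calc δ * (#C * (#C - 1)) = ∑ S ∈ C, δ * (#C - 1) := by rw [sum_const, nsmul_eq_mul]; ring
    _ ≤ _ := sum_le_sum hrow

lemma IsSeparated.half_mul_card_sub_one_le (hsep : IsSeparated P δ C) (hP0 : ∀ x, 0 ≤ P x)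
    (hC : C.Nonempty) :
    δ / 2 * (#C - 1) ≤ ∑ x, P x * (min #(C.filter (x ∉ ·)) #(C.filter (x ∈ ·)) : ℕ) := by
  have hprod : ∀ x, (#(C.filter (x ∉ ·)) * #(C.filter (x ∈ ·)) : ℕ) ≤
      #C * min #(C.filter (x ∉ ·)) #(C.filter (x ∈ ·)) := fun x => by
    have hsplit : #(C.filter (x ∉ ·)) + #(C.filter (x ∈ ·)) = #C := by
      simpa only [not_not] using card_filter_add_card_filter_not (s := C) (x ∉ ·)
    rw [← hsplit]
    exact Nat.mul_le_add_mul_min _ _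
  refine le_of_mul_le_mul_left ?_ (by positivity : (0 : ℝ) < 2 * #C)
  calc 2 * #C * (δ / 2 * (#C - 1)) = δ * (#C * (#C - 1)) := by ring
    _ ≤ ∑ S ∈ C, ∑ T ∈ C, meas P (symmDiff S T) := hsep.mul_card_mul_card_sub_one_le
    _ = 2 * ∑ x, P x * (#(C.filter (x ∉ ·)) * #(C.filter (x ∈ ·)) : ℕ) := sum_sum_meas_symmDiff P C
    _ ≤ 2 * ∑ x, P x * (#C * min #(C.filter (x ∉ ·)) #(C.filter (x ∈ ·)) : ℕ) := by
        refine mul_le_mul_of_nonneg_left (sum_le_sum fun x _ => ?_) zero_le_two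
        exact mul_le_mul_of_nonneg_left (Nat.cast_le.2 (hprod x)) (hP0 x)
    _ = 2 * #C * ∑ x, P x * (min #(C.filter (x ∉ ·)) #(C.filter (x ∈ ·)) : ℕ) := by
        simp only [mul_sum, Nat.cast_mul, Nat.cast_min]
        exact sum_congr rfl fun x _ => by ring

end Separation

section Resample

variable {ι X : Type*} [Fintype ι] [DecidableEq ι] {V : Finset (Finset X)} {ω : ι → X}
  {i : ι} {x : X}

lemma trace_update_eq_iff {S : Finset X} {w : Finset ι} :
    trace (Function.update ω i x) S = w ↔ (trace ω S).erase i = w.erase i ∧ (x ∈ S ↔ i ∈ w) := by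
  simp only [Finset.ext_iff, mem_erase, mem_trace, Function.update_apply]
  constructor
  · intro h
    refine ⟨fun j => ?_, by simpa using h i⟩
    by_cases hj : j = i
    · simp [hj]
    · simpa [hj] using h j
  · rintro ⟨h, hi⟩ j
    by_cases hj : j = i
    · simp [hj, hi]
    · simpa [hj] using h j

lemma traceCount_update_of_notMem {v : Finset ι} (hiv : i ∉ v) :
    traceCount V (Function.update ω i x) v =
      #((V.filter fun S => (trace ω S).erase i = v).filter (x ∉ ·)) := by
  rw [traceCount, filter_filter]
  congr 1
  refine filter_congr fun S _ => ?_
  rw [trace_update_eq_iff, erase_eq_of_notMem hiv]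
  simp [hiv]

lemma traceCount_update_insert {v : Finset ι} (hiv : i ∉ v) :
    traceCount V (Function.update ω i x) (insert i v) =
      #((V.filter fun S => (trace ω S).erase i = v).filter (x ∈ ·)) := by
  rw [traceCount, filter_filter]
  congr 1
  refine filter_congr fun S _ => ?_
  rw [trace_update_eq_iff, erase_insert hiv]
  simp

lemma card_image_erase_trace_le :
    #(V.image fun S => (trace ω S).erase i) ≤ #(V.image (trace ω)) := by
  calc #(V.image fun S => (trace ω S).erase i) = #((V.image (trace ω)).image (·.erase i)) := by
        rw [image_image]; rfl
    _ ≤ _ := card_image_le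

lemma IsSeparated.half_mul_card_sub_card_image_le [Fintype X] {P : X → ℝ} {δ : ℝ}
    (hsep : IsSeparated P δ V) (hP0 : ∀ x, 0 ≤ P x) (ω : ι → X) (i : ι) :
    δ / 2 * (#V - #(V.image fun S => (trace ω S).erase i)) ≤
      ∑ x, P x * edgeMassAt univ (traceCount V (Function.update ω i x)) i := by
  set I := V.image fun S => (trace ω S).erase i
  set C : Finset ι → Finset (Finset X) := fun v => V.filter fun S => (trace ω S).erase i = v
  have hI : ∀ v ∈ I, i ∉ v := fun v hv => by
    obtain ⟨S, -, rfl⟩ := mem_image.1 hv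
    exact notMem_erase i _
  have hedge : ∀ x, edgeMassAt univ (traceCount V (Function.update ω i x)) i =
      ∑ v ∈ I, min #((C v).filter (x ∉ ·)) #((C v).filter (x ∈ ·)) := fun x => by
    refine (sum_subset (fun v hv => ?_) fun v hv hvI => ?_).symm.trans
      (sum_congr rfl fun v hv => ?_)
    · obtain ⟨S, -, rfl⟩ := mem_image.1 hv
      exact mem_powerset.2 (erase_subset_erase i (subset_univ _))
    · suffices traceCount V (Function.update ω i x) v = 0 by rw [this, zero_min]
      refine card_eq_zero.2 (filter_eq_empty_iff.2 fun S hS hSv => hvI (mem_image.2 ⟨S, hS, ?_⟩))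
      have hiv : i ∉ v := fun h => notMem_erase i univ (mem_powerset.1 hv h)
      rw [(trace_update_eq_iff.1 hSv).1, erase_eq_of_notMem hiv]
    · rw [traceCount_update_of_notMem (hI v hv), traceCount_update_insert (hI v hv)]
  have hcard : (#V : ℝ) - #I = ∑ v ∈ I, ((#(C v) : ℝ) - 1) := by
    rw [sum_sub_distrib, ← Nat.cast_sum, ← card_eq_sum_card_image]
    simp
  calc δ / 2 * (#V - #I) = ∑ v ∈ I, δ / 2 * (#(C v) - 1) := by rw [hcard, mul_sum]
    _ ≤ ∑ v ∈ I, ∑ x, P x * (min #((C v).filter (x ∉ ·)) #((C v).filter (x ∈ ·)) : ℕ) := by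
        refine sum_le_sum fun v hv =>
          (hsep.mono (filter_subset _ _)).half_mul_card_sub_one_le hP0 ?_
        obtain ⟨S, hS, rfl⟩ := mem_image.1 hv
        exact ⟨S, mem_filter.2 ⟨hS, rfl⟩⟩
    _ = ∑ x, P x * edgeMassAt univ (traceCount V (Function.update ω i x)) i := by
        simp_rw [hedge, Nat.cast_sum, mul_sum]
        rw [sum_comm]

end Resample

section SampleMean

variable {ι X : Type*} [Fintype ι] [DecidableEq ι]

lemma prod_apply_update_mul {P : X → ℝ} (ω : ι → X) (i : ι) (x : X) :
    (∏ j, P (Function.update ω i x j)) * P (ω i) = (∏ j, P (ω j)) * P x := by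
  simp_rw [Function.apply_update (fun _ => P), prod_update_of_mem (mem_univ i),
    Fintype.prod_eq_mul_prod_compl i, compl_eq_univ_sdiff]
  ring

variable [Fintype X]

def sampleMean (P : X → ℝ) (f : (ι → X) → ℝ) : ℝ := ∑ ω, (∏ j, P (ω j)) * f ω

variable {P : X → ℝ}

lemma sampleMean_const (hP1 : ∑ x, P x = 1) (c : ℝ) : sampleMean P (fun _ : ι → X => c) = c := by
  rw [sampleMean, ← sum_mul, ← Fintype.prod_sum, hP1, prod_const_one, one_mul]

lemma sampleMean_mono (hP0 : ∀ x, 0 ≤ P x) {f g : (ι → X) → ℝ} (h : ∀ ω, f ω ≤ g ω) :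
    sampleMean P f ≤ sampleMean P g :=
  sum_le_sum fun ω _ => mul_le_mul_of_nonneg_left (h ω) (prod_nonneg fun _ _ => hP0 _)

lemma sampleMean_sum {κ : Type*} (s : Finset κ) (f : κ → (ι → X) → ℝ) :
    sampleMean P (fun ω => ∑ k ∈ s, f k ω) = ∑ k ∈ s, sampleMean P (f k) := by
  simp only [sampleMean, mul_sum]
  exact sum_comm

lemma sampleMean_mul_sub (hP1 : ∑ x, P x = 1) (a b : ℝ) (f : (ι → X) → ℝ) :
    sampleMean P (fun ω => a * (b - f ω)) = a * (b - sampleMean P f) := by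
  have hb := sampleMean_const (ι := ι) hP1 b
  simp only [sampleMean] at hb ⊢
  calc ∑ ω : ι → X, (∏ j, P (ω j)) * (a * (b - f ω))
      = a * (∑ ω : ι → X, (∏ j, P (ω j)) * b - ∑ ω : ι → X, (∏ j, P (ω j)) * f ω) := by
        rw [← sum_sub_distrib, mul_sum]
        exact sum_congr rfl fun ω _ => by ring
    _ = _ := by rw [hb]

lemma sampleMean_resample (hP1 : ∑ x, P x = 1) (i : ι) (g : (ι → X) → ℝ) :
    sampleMean P (fun ω => ∑ x, P x * g (Function.update ω i x)) = sampleMean P g := by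
  let σ : Equiv.Perm ((ι → X) × X) := Function.Involutive.toPerm
    (fun p => (Function.update p.1 i p.2, p.1 i)) fun p => by simp
  calc sampleMean P (fun ω => ∑ x, P x * g (Function.update ω i x))
      = ∑ p : (ι → X) × X, (∏ j, P (p.1 j)) * P p.2 * g (Function.update p.1 i p.2) := by
        simp only [sampleMean, Fintype.sum_prod_type, mul_sum, mul_assoc]
    _ = ∑ p : (ι → X) × X, (∏ j, P (p.1 j)) * P p.2 * g p.1 :=
        Fintype.sum_equiv σ _ _ fun p => by
          rw [← prod_apply_update_mul p.1 i p.2]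
          rfl
    _ = sampleMean P g := by
        simp only [sampleMean, Fintype.sum_prod_type, mul_right_comm _ (P _), ← mul_sum, hP1,
          mul_one]

end SampleMean

section Packing

open Real

lemma sum_Iic_choose_le {d n : ℕ} (hd : 0 < d) (hdn : d ≤ n) :
    (∑ k ∈ Iic d, n.choose k : ℝ) ≤ (exp 1 * n / d) ^ d := by
  have hn : (0 : ℝ) < n := Nat.cast_pos.2 (hd.trans_le hdn)
  set x : ℝ := d / n
  have hx0 : 0 < x := by positivity
  have hx1 : x ≤ 1 := div_le_one_of_le₀ (Nat.cast_le.2 hdn) hn.le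
  have hbinom : (∑ k ∈ Iic d, n.choose k : ℝ) * x ^ d ≤ exp 1 ^ d :=
    calc (∑ k ∈ Iic d, n.choose k : ℝ) * x ^ d
        ≤ ∑ k ∈ Iic d, (n.choose k : ℝ) * x ^ k := by
          rw [sum_mul]
          exact sum_le_sum fun k hk =>
            mul_le_mul_of_nonneg_left (pow_le_pow_of_le_one hx0.le hx1 (mem_Iic.1 hk))
              (Nat.cast_nonneg _)
      _ ≤ ∑ k ∈ range (n + 1), (n.choose k : ℝ) * x ^ k := by
          rw [Nat.range_succ_eq_Iic]
          exact sum_le_sum_of_subset_of_nonneg (Iic_subset_Iic.2 hdn) fun k _ _ => by positivity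
      _ = (x + 1) ^ n := by rw [add_pow]; simp [mul_comm]
      _ ≤ exp x ^ n := pow_le_pow_left₀ (by positivity) (add_one_le_exp x) n
      _ = exp 1 ^ d := by rw [← exp_nat_mul, ← exp_nat_mul, mul_div_cancel₀ _ hn.ne', mul_one]
  rw [show exp 1 * n / d = exp 1 / x by rw [div_div_eq_mul_div], div_pow,
    le_div_iff₀ (by positivity)]
  exact hbinom

lemma two_mul_sum_Iic_choose_ceil_le {d : ℕ} {δ : ℝ} (hd : 0 < d) (hδ : 0 < δ) (hδ1 : δ ≤ 1) :
    2 * (∑ k ∈ Iic d, (⌈4 * d / δ⌉₊).choose k : ℝ) ≤ (30 / δ) ^ d := by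
  set n := ⌈4 * d / δ⌉₊
  have hd_le : (d : ℝ) ≤ d / δ := le_div_self (Nat.cast_nonneg d) hδ hδ1
  have hd1 : (1 : ℝ) ≤ d := Nat.one_le_cast.2 hd
  have hn_ge : 4 * d / δ ≤ n := Nat.le_ceil _
  have hn_le : (n : ℝ) * δ ≤ 5 * d := by
    have h := Nat.ceil_lt_add_one (by positivity : (0 : ℝ) ≤ 4 * d / δ)
    have h1 : (1 : ℝ) ≤ d / δ := by rw [le_div_iff₀ hδ]; linarith
    have : (n : ℝ) ≤ 5 * d / δ := by linarith [show 5 * (d : ℝ) / δ = 4 * d / δ + d / δ by ring]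
    rwa [le_div_iff₀ hδ] at this
  have hdn : d ≤ n := (Nat.cast_le (α := ℝ)).1 <| by
    linarith [show 4 * (d : ℝ) / δ = 4 * (d / δ) by ring]
  calc 2 * (∑ k ∈ Iic d, n.choose k : ℝ)
      ≤ 2 ^ d * (exp 1 * n / d) ^ d := by
        gcongr
        · exact le_self_pow₀ one_le_two hd.ne'
        · exact sum_Iic_choose_le hd hdn
    _ ≤ 2 ^ d * (5 * exp 1 / δ) ^ d := by
        gcongr 2 ^ d * ?_ ^ d
        rw [div_le_div_iff₀ (by linarith) hδ]
        nlinarith [exp_pos 1]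
    _ = (10 * exp 1 / δ) ^ d := by rw [← mul_pow]; ring_nf
    _ ≤ (30 / δ) ^ d := by
        gcongr
        linarith [exp_one_lt_d9]

variable {X : Type*} [Fintype X] {P : X → ℝ} {δ : ℝ} {V : Finset (Finset X)}

theorem IsSeparated.card_mul_sub_sampleMean_card_image_trace_le (hsep : IsSeparated P δ V)
    (hP0 : ∀ x, 0 ≤ P x) (hP1 : ∑ x, P x = 1) (hδ : 0 ≤ δ) (ι : Type*) [Fintype ι] [DecidableEq ι] :
    Fintype.card ι * (δ / 2 * (#V - sampleMean P fun ω : ι → X => (#(V.image (trace ω)) : ℝ))) ≤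
      V.vcDim * #V := by
  set m := sampleMean P fun ω : ι → X => (#(V.image (trace ω)) : ℝ)
  have hlower : ∀ i, δ / 2 * (#V - m) ≤
      sampleMean P fun ω => (edgeMassAt univ (traceCount V ω) i : ℝ) := fun i =>
    calc δ / 2 * (#V - m)
        = sampleMean P fun ω : ι → X => δ / 2 * (#V - #(V.image (trace ω))) :=
          (sampleMean_mul_sub hP1 _ _ _).symm
      _ ≤ sampleMean P fun ω : ι → X => δ / 2 * (#V - #(V.image fun S => (trace ω S).erase i)) :=
          sampleMean_mono hP0 fun ω => mul_le_mul_of_nonneg_left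
            (sub_le_sub_left (Nat.cast_le.2 card_image_erase_trace_le) _) (by positivity)
      _ ≤ sampleMean P fun ω =>
            ∑ x, P x * (edgeMassAt univ (traceCount V (Function.update ω i x)) i : ℝ) :=
          sampleMean_mono hP0 fun ω => hsep.half_mul_card_sub_card_image_le hP0 ω i
      _ = _ := sampleMean_resample hP1 i fun ω => (edgeMassAt univ (traceCount V ω) i : ℝ)
  have hupper : ∑ i : ι, (sampleMean P fun ω : ι → X => (edgeMassAt univ (traceCount V ω) i : ℝ)) ≤
      V.vcDim * #V := by
    rw [← sampleMean_sum]
    calc _ ≤ sampleMean P fun _ : ι → X => (V.vcDim * #V : ℝ) :=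
          sampleMean_mono hP0 fun ω => by
            rw [← Nat.cast_sum]
            exact_mod_cast edgeMass_traceCount_le
      _ = _ := sampleMean_const hP1 _
  calc Fintype.card ι * (δ / 2 * (#V - m)) = ∑ _i : ι, δ / 2 * (#V - m) := by
        rw [sum_const, card_univ, nsmul_eq_mul]
    _ ≤ _ := (sum_le_sum fun i _ => hlower i).trans hupper

theorem IsSeparated.card_le_div_pow (hsep : IsSeparated P δ V) (hP0 : ∀ x, 0 ≤ P x)
    (hP1 : ∑ x, P x = 1) {d : ℕ} (hV : V.vcDim ≤ d) (hδ : 0 < δ) (hδ1 : δ ≤ 1) :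
    (#V : ℝ) ≤ (30 / δ) ^ d := by
  rcases Nat.eq_zero_or_pos d with rfl | hd
  · have : #V ≤ 1 := (card_le_card_shatterer V).trans <| card_shatterer_le_sum_vcDim.trans <| by
      rw [Nat.le_zero.1 hV, ← Nat.range_succ_eq_Iic]
      simp
    simpa using this
  set n := ⌈4 * d / δ⌉₊
  set m := sampleMean P fun ω : Fin n → X => (#(V.image (trace ω)) : ℝ)
  have hcount := hsep.card_mul_sub_sampleMean_card_image_trace_le hP0 hP1 hδ.le (Fin n)
  rw [Fintype.card_fin] at hcount
  have hm : m ≤ ∑ k ∈ Iic d, (n.choose k : ℝ) :=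
    calc m ≤ sampleMean P fun _ : Fin n → X => (∑ k ∈ Iic d, n.choose k : ℝ) :=
          sampleMean_mono hP0 fun ω => by
            exact_mod_cast (card_image_trace_le hV).trans_eq (by rw [Fintype.card_fin])
      _ = _ := sampleMean_const hP1 _
  have hm0 : 0 ≤ m := (sampleMean_const hP1 0).symm.le.trans <| sampleMean_mono hP0 fun ω => by
    positivity
  have hn : 4 * d ≤ n * δ := (div_le_iff₀ hδ).1 (Nat.le_ceil _)
  have hvc : (V.vcDim : ℝ) ≤ d := Nat.cast_le.2 hV
  have hd1 : (1 : ℝ) ≤ d := Nat.one_le_cast.2 hd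
  have hVm : (#V : ℝ) ≤ 2 * m := by
    by_contra! h
    nlinarith
  calc (#V : ℝ) ≤ 2 * m := hVm
    _ ≤ 2 * ∑ k ∈ Iic d, (n.choose k : ℝ) := by gcongr
    _ ≤ (30 / δ) ^ d := two_mul_sum_Iic_choose_ceil_le hd hδ hδ1

end Packing

section Capacity

variable {X : Type*} [Fintype X] {P : X → ℝ}

theorem IsSeparated.card_le_mul_meas_div_pow {V : Finset (Finset X)} {δ : ℝ}
    (hsep : IsSeparated P δ V) (hP0 : ∀ x, 0 ≤ P x) {U : Finset X} (hVU : ∀ S ∈ V, S ⊆ U)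
    {d : ℕ} (hV : V.vcDim ≤ d) (hδ : 0 < δ) (hδU : δ ≤ meas P U) :
    (#V : ℝ) ≤ (30 * meas P U / δ) ^ d := by
  set μ := meas P U
  have hμ : 0 < μ := hδ.trans_le hδU
  set P' : X → ℝ := fun x => if x ∈ U then P x / μ else 0
  have hP'0 : ∀ x, 0 ≤ P' x := fun x => by
    dsimp only [P']
    split_ifs
    exacts [div_nonneg (hP0 x) hμ.le, le_rfl]
  have hP'_meas : ∀ A ⊆ U, meas P' A = meas P A / μ := fun A hA => by
    rw [meas, meas, sum_div]
    exact sum_congr rfl fun x hx => if_pos (hA hx)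
  have hP'1 : ∑ x, P' x = 1 := by
    rw [sum_ite_mem, univ_inter, ← sum_div]
    exact div_self hμ.ne'
  have hsdU : ∀ S ∈ V, ∀ T ∈ V, symmDiff S T ⊆ U := fun S hS T hT =>
    symmDiff_le_sup.trans (union_subset (hVU S hS) (hVU T hT))
  have hsep' : IsSeparated P' (δ / μ) V := fun S hS T hT hST => by
    show δ / μ ≤ meas P' (symmDiff S T)
    rw [hP'_meas _ (hsdU S hS T hT)]
    exact div_le_div_of_nonneg_right (hsep hS hT hST) hμ.le
  have hpack := hsep'.card_le_div_pow hP'0 hP'1 hV (div_pos hδ hμ) ((div_le_one hμ).2 hδU)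
  rwa [div_div_eq_mul_div] at hpack

lemma meas_biUnion_le_mul_alexCap (hP0 : ∀ x, 0 ≤ P x) (hP1 : ∑ x, P x = 1)
    (R : Finset (Finset X)) {ε ε₁ : ℝ} (hε : 0 < ε) (hε₁ : ε ≤ ε₁) :
    meas P ((R.filter fun S => meas P S ≤ ε₁).biUnion id) ≤ ε₁ * alexCap P R ε := by
  have hε₁pos : 0 < ε₁ := hε.trans_le hε₁
  have hbdd : BddAbove {t : ℝ | ∃ ε₀ : ℝ, ε ≤ ε₀ ∧
      t = meas P ((R.filter fun S => meas P S ≤ ε₀).biUnion id) / ε₀} := by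
    refine ⟨1 / ε, ?_⟩
    rintro t ⟨ε₀, hε₀, rfl⟩
    have hle_one : meas P ((R.filter fun S => meas P S ≤ ε₀).biUnion id) ≤ 1 :=
      hP1 ▸ meas_mono hP0 (subset_univ _)
    calc _ ≤ 1 / ε₀ := div_le_div_of_nonneg_right hle_one (hε.trans_le hε₀).le
      _ ≤ 1 / ε := one_div_le_one_div_of_le hε hε₀
  have h := le_csSup hbdd ⟨ε₁, hε₁, rfl⟩
  rwa [div_le_iff₀ hε₁pos, mul_comm] at h

end Capacity

/-- Corollary: for any range space of VC-dimension `d` there is an absolute constant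
`c > 0` such that the doubling constant satisfies `D_ε ≤ (c·τ(ε))^d` (with Alexander's
capacity taken `≥ 1`): every `ε₀`-separated family of ranges of measure at most `2ε₀`,
for any `ε₀ ≥ ε`, has at most `(c·τ(ε))^d` members. -/
theorem doubling_le_capacity_pow : ∃ c : ℝ, 0 < c ∧
    ∀ (X : Type) [Fintype X], ∀ P : X → ℝ, (∀ x, 0 ≤ P x) → (∑ x, P x) = 1 →
    ∀ (R : Finset (Finset X)) (d : ℕ),
      (∀ Y : Finset X, (∀ Z ⊆ Y, ∃ S ∈ R, S ∩ Y = Z) → Y.card ≤ d) →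
      ∀ ε : ℝ, ε ∈ Set.Ioc (0 : ℝ) 1 →
      ∀ ε₀ : ℝ, ε ≤ ε₀ → ∀ Q : Finset (Finset X), Q ⊆ R →
        (∀ S ∈ Q, meas P S ≤ 2 * ε₀) →
        (∀ S₁ ∈ Q, ∀ S₂ ∈ Q, S₁ ≠ S₂ → ε₀ ≤ meas P (symmDiff S₁ S₂)) →
        (Q.card : ℝ) ≤ (c * max 1 (alexCap P R ε)) ^ d := by
  refine ⟨60, by norm_num, ?_⟩
  intro X _ P hP0 hP1 R d hVC ε hε ε₀ hε₀ Q hQR hQm hQsep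
  set τ := max 1 (alexCap P R ε)
  have hε₀pos : 0 < ε₀ := hε.1.trans_le hε₀
  have hRd : R.vcDim ≤ d := vcDim_le_of_forall_shatters fun Y hY => hVC Y fun Z hZ => by
    obtain ⟨S, hS, hYS⟩ := hY hZ
    exact ⟨S, hS, by rw [inter_comm, hYS]⟩
  rcases le_or_gt #Q 1 with hQ1 | hQ1
  · exact (Nat.cast_le_one.2 hQ1).trans (one_le_pow₀ (by linarith [le_max_left 1 (alexCap P R ε)]))
  set U := Q.biUnion id
  have hQU : ∀ S ∈ Q, S ⊆ U := fun S hS => subset_biUnion_of_mem id hS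
  have hε₀U : ε₀ ≤ meas P U := IsSeparated.le_meas_of_one_lt_card hQsep hP0 hQU hQ1
  have hUτ : meas P U ≤ 2 * ε₀ * τ :=
    calc meas P U ≤ meas P ((R.filter fun S => meas P S ≤ 2 * ε₀).biUnion id) :=
          meas_mono hP0 (biUnion_subset_biUnion_of_subset_left _
            fun S hS => mem_filter.2 ⟨hQR hS, hQm S hS⟩)
      _ ≤ 2 * ε₀ * alexCap P R ε := meas_biUnion_le_mul_alexCap hP0 hP1 R hε.1 (by linarith)
      _ ≤ 2 * ε₀ * τ := by gcongr; exact le_max_right _ _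
  calc (#Q : ℝ) ≤ (30 * meas P U / ε₀) ^ d :=
        IsSeparated.card_le_mul_meas_div_pow hQsep hP0 hQU ((vcDim_mono hQR).trans hRd) hε₀pos hε₀U
    _ ≤ (60 * τ) ^ d := by
        gcongr ?_ ^ d
        · exact div_nonneg (by linarith) hε₀pos.le
        · rw [div_le_iff₀ hε₀pos]
          linarith
end
end

section
/- (Key conditional-measure step of Theorem 1) Fix i ≥ 1 and let R_i = {R ∈ R : 2^{i-1}ε ≤ P(R) < 2^i ε} and X^{(i)} = ⋃_{R ∈ R_i} R. If P(X^{(i)}) ≤ τ_i·2^i ε (which follows from the definition of Alexander's capacity), then for every R ∈ R_i, P(R | X^{(i)}) ≥ 1/(2τ_i); consequently any (1/(2τ_i))-net for (X^{(i)}, R_i) under the conditional measure P(·|X^{(i)}) is an ε-net for R_i under P. -/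
open scoped Classical

noncomputable section

lemma meas_mono_s18 {X : Type*} (P : X → ℝ) (hP : ∀ x, 0 ≤ P x) {A B : Finset X}
    (h : A ⊆ B) : meas P A ≤ meas P B :=
  Finset.sum_le_sum_of_subset_of_nonneg h (fun x _ _ => hP x)

/-- Key conditional-measure step of Theorem 1: with
`R_i = {R : 2^{i-1}ε ≤ P(R) < 2^i ε}` and `X^{(i)} = ⋃ R_i`, if
`P(X^{(i)}) ≤ τ_i·2^i ε`, then every `R ∈ R_i` has conditional measure
`P(R | X^{(i)}) ≥ 1/(2τ_i)`, and consequently any `(1/(2τ_i))`-net for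
`(X^{(i)}, R_i)` under `P(·|X^{(i)})` is an `ε`-net for `R_i` under `P`. -/
theorem conditional_measure_step {X : Type*} (P : X → ℝ) (hP : ∀ x, 0 ≤ P x)
    (R : Finset (Finset X)) (ε τi : ℝ) (hε : 0 < ε) (hτ : 1 ≤ τi)
    (i : ℕ) (hi : 1 ≤ i)
    (Ri : Finset (Finset X))
    (hRi : Ri = R.filter fun S => 2 ^ (i - 1) * ε ≤ meas P S ∧ meas P S < 2 ^ i * ε)
    (Xi : Finset X) (hXi : Xi = Ri.sup id)
    (hcap : meas P Xi ≤ τi * (2 ^ i * ε)) :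
    (∀ T ∈ Ri, 1 / (2 * τi) ≤ meas P (T ∩ Xi) / meas P Xi) ∧
      (∀ S : Finset X,
        (∀ T ∈ Ri, 1 / (2 * τi) ≤ meas P (T ∩ Xi) / meas P Xi → (T ∩ S).Nonempty) →
        ∀ T ∈ Ri, ε ≤ meas P T → (T ∩ S).Nonempty) := by
  have key : ∀ T ∈ Ri, 1 / (2 * τi) ≤ meas P (T ∩ Xi) / meas P Xi := by
    intro T hT
    have hsub : T ⊆ Xi := by
      rw [hXi]; exact Finset.le_sup (f := id) hT
    have hinter : T ∩ Xi = T := Finset.inter_eq_left.mpr hsub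
    rw [hinter]
    have hTle : 2 ^ (i - 1) * ε ≤ meas P T := by
      rw [hRi] at hT
      exact (Finset.mem_filter.mp hT).2.1
    have hTpos : 0 < meas P T :=
      lt_of_lt_of_le (by positivity) hTle
    have hXipos : 0 < meas P Xi :=
      lt_of_lt_of_le hTpos (meas_mono_s18 P hP hsub)
    rw [div_le_div_iff₀ (by positivity) hXipos]
    calc 1 * meas P Xi ≤ 1 * (τi * (2 ^ i * ε)) := by
          rw [one_mul, one_mul]; exact hcap
      _ = (2 ^ (i - 1) * ε) * (2 * τi) := by
          have : (2 : ℝ) ^ i = 2 ^ (i - 1) * 2 := by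
            rw [← pow_succ]; congr 1; omega
          rw [this]; ring
      _ ≤ meas P T * (2 * τi) := by
          apply mul_le_mul_of_nonneg_right hTle
          positivity
  refine ⟨key, fun S hnet T hT _ => hnet T hT (key T hT)⟩
end
end
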